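/- For sufficiently small feedback gain the extreme column sums of the Jacobian are uniformly negative on the cube: there exists k* > 0 such that for all 0 < k < k*, s_1(x) ≤ −λ_0 k g(λ_n) < 0 and s_n(x) ≤ −λ_n − λ_0 λ_n k · min_{r ∈ [0,1]} g'(λ_n r) < 0 for every x ∈ [0,1]^n, where s_j(x) denotes the j-th column sum of the Jacobian J(x) with off-diagonal entries taken in absolute value. -/

import Mathlib

open scoped BigOperators

/-- Extend a vector `x : Fin n → ℝ` to a function on `ℕ` (zero outside the range). -/
noncomputable def extVec {n : ℕ} (x : Fin n → ℝ) (j : ℕ) : ℝ :=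
  if h : j < n then x ⟨j, h⟩ else 0

/-- The flow from site `j` to site `j+1` (1-based paper indexing of the rates;
`j = 0` is the initiation flow, `j = n` is the exit flow) in the closed-loop
ribosome flow model with negative feedback `u = k g(y)`. Densities are stored
0-based: Lean index `i` corresponds to the paper's site `i+1`. -/
noncomputable def rfmFlow (n : ℕ) (lam : ℕ → ℝ) (k : ℝ) (g : ℝ → ℝ)
    (x : Fin n → ℝ) (j : ℕ) : ℝ :=
  if j = 0 then lam 0 * k * g (lam n * extVec x (n - 1)) * (1 - extVec x 0)
  else if j = n then lam n * extVec x (n - 1)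
  else lam j * extVec x (j - 1) * (1 - extVec x j)

/-- The vector field of the closed-loop RFM with negative feedback. -/
noncomputable def rfmField (n : ℕ) (lam : ℕ → ℝ) (k : ℝ) (g : ℝ → ℝ)
    (x : Fin n → ℝ) : Fin n → ℝ :=
  fun i => rfmFlow n lam k g x i.val - rfmFlow n lam k g x (i.val + 1)

/-- The Jacobian matrix of the closed-loop RFM vector field:
`J(x)_{ij}` is the partial derivative of `f_i` with respect to `x_j` at `x`. -/
noncomputable def rfmJac (n : ℕ) (lam : ℕ → ℝ) (k : ℝ) (g : ℝ → ℝ)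
    (x : Fin n → ℝ) : Matrix (Fin n) (Fin n) ℝ :=
  Matrix.of fun i j =>
    deriv (fun s => rfmField n lam k g (Function.update x j s) i) (x j)

/-- The `j`-th column sum of the Jacobian, with off-diagonal entries taken in
absolute value (the quantity appearing in the `L1` matrix measure). -/
noncomputable def colSum (n : ℕ) (lam : ℕ → ℝ) (k : ℝ) (g : ℝ → ℝ)
    (x : Fin n → ℝ) (j : Fin n) : ℝ :=
  rfmJac n lam k g x j j + ∑ i ∈ Finset.univ.erase j, |rfmJac n lam k g x i j|

/- ### auxiliary lemmas -/

lemma extVec_lt {n : ℕ} (x : Fin n → ℝ) (j : ℕ) (h : j < n) :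
    extVec x j = x ⟨j, h⟩ := by simp [extVec, h]

lemma extVec_update_self {n : ℕ} (x : Fin n → ℝ) (j : Fin n) (s : ℝ) :
    extVec (Function.update x j s) j.val = s := by
  simp [extVec, j.isLt]

lemma extVec_update_ne {n : ℕ} (x : Fin n → ℝ) (j : Fin n) (s : ℝ) (m : ℕ)
    (hm : m ≠ j.val) :
    extVec (Function.update x j s) m = extVec x m := by
  unfold extVec
  split_ifs with h
  · rw [Function.update_of_ne (fun he => hm (by simpa using congrArg Fin.val he))]
  · rfl

lemma deriv_affine (a b t : ℝ) : deriv (fun s => a + b * s) t = b := by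
  have : HasDerivAt (fun s : ℝ => a + b * s) b t := by
    simpa using ((hasDerivAt_id t).const_mul b).const_add a
  exact this.deriv

lemma rfmFlow_zero (n : ℕ) (lam : ℕ → ℝ) (k : ℝ) (g : ℝ → ℝ) (x : Fin n → ℝ) :
    rfmFlow n lam k g x 0 = lam 0 * k * g (lam n * extVec x (n - 1)) * (1 - extVec x 0) := by
  simp [rfmFlow]

lemma rfmFlow_mid (n : ℕ) (lam : ℕ → ℝ) (k : ℝ) (g : ℝ → ℝ) (x : Fin n → ℝ)
    (m : ℕ) (h0 : m ≠ 0) (hn : m ≠ n) :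
    rfmFlow n lam k g x m = lam m * extVec x (m - 1) * (1 - extVec x m) := by
  simp [rfmFlow, h0, hn]

lemma rfmFlow_last (n : ℕ) (lam : ℕ → ℝ) (k : ℝ) (g : ℝ → ℝ) (x : Fin n → ℝ)
    (h0 : n ≠ 0) :
    rfmFlow n lam k g x n = lam n * extVec x (n - 1) := by
  simp [rfmFlow, h0]

lemma rfmFlow_update_ne (n : ℕ) (lam : ℕ → ℝ) (k : ℝ) (g : ℝ → ℝ)
    (x : Fin n → ℝ) (j : Fin n) (s : ℝ) (m : ℕ)
    (h1 : m - 1 ≠ j.val) (h2 : m ≠ j.val) (h3 : m = 0 → n - 1 ≠ j.val) :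
    rfmFlow n lam k g (Function.update x j s) m = rfmFlow n lam k g x m := by
  unfold rfmFlow
  split_ifs with hm0 hmn
  · subst hm0
    rw [extVec_update_ne x j s _ (h3 rfl), extVec_update_ne x j s _ h2]
  · subst hmn
    rw [extVec_update_ne x j s _ h1]
  · rw [extVec_update_ne x j s _ h1, extVec_update_ne x j s _ h2]

/- ### Jacobian entries, column 0 -/

lemma jac_00 {n : ℕ} (hn : 3 ≤ n) (lam : ℕ → ℝ) (k : ℝ) (g : ℝ → ℝ) (x : Fin n → ℝ) :
    rfmJac n lam k g x ⟨0, by have := hn; omega⟩ ⟨0, by have := hn; omega⟩ =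
      -(lam 0 * k * g (lam n * extVec x (n - 1))) - lam 1 * (1 - extVec x 1) := by
  have h0 : (0:ℕ) < n := by omega
  have hfun : (fun s => rfmField n lam k g (Function.update x ⟨0, h0⟩ s) ⟨0, h0⟩)
      = fun s => lam 0 * k * g (lam n * extVec x (n - 1))
        + (-(lam 0 * k * g (lam n * extVec x (n - 1))) - lam 1 * (1 - extVec x 1)) * s := by
    funext s
    show rfmFlow n lam k g (Function.update x ⟨0, h0⟩ s) 0
        - rfmFlow n lam k g (Function.update x ⟨0, h0⟩ s) 1 = _
    rw [rfmFlow_zero, rfmFlow_mid n lam k g _ 1 one_ne_zero (by omega),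
        show (1:ℕ) - 1 = 0 from rfl,
        extVec_update_ne x _ s (n-1) (show n - 1 ≠ 0 by omega),
        extVec_update_ne x _ s 1 (show (1:ℕ) ≠ 0 by omega),
        show extVec (Function.update x (⟨0, h0⟩ : Fin n) s) 0 = s from extVec_update_self x _ s]
    ring
  show deriv (fun s => rfmField n lam k g (Function.update x ⟨0, h0⟩ s) ⟨0, h0⟩) (x ⟨0, h0⟩) = _
  rw [hfun]
  exact deriv_affine _ _ _

lemma jac_10 {n : ℕ} (hn : 3 ≤ n) (lam : ℕ → ℝ) (k : ℝ) (g : ℝ → ℝ) (x : Fin n → ℝ) :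
    rfmJac n lam k g x ⟨1, by have := hn; omega⟩ ⟨0, by have := hn; omega⟩ = lam 1 * (1 - extVec x 1) := by
  have h0 : (0:ℕ) < n := by omega
  have h1 : (1:ℕ) < n := by omega
  have hfun : (fun s => rfmField n lam k g (Function.update x ⟨0, h0⟩ s) ⟨1, h1⟩)
      = fun s => -(lam 2 * extVec x 1 * (1 - extVec x 2))
        + (lam 1 * (1 - extVec x 1)) * s := by
    funext s
    show rfmFlow n lam k g (Function.update x ⟨0, h0⟩ s) 1
        - rfmFlow n lam k g (Function.update x ⟨0, h0⟩ s) 2 = _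
    rw [rfmFlow_mid n lam k g _ 1 one_ne_zero (by omega),
        rfmFlow_mid n lam k g _ 2 (by omega) (by omega),
        show (1:ℕ) - 1 = 0 from rfl, show (2:ℕ) - 1 = 1 from rfl,
        extVec_update_ne x _ s 1 (show (1:ℕ) ≠ 0 by omega),
        extVec_update_ne x _ s 2 (show (2:ℕ) ≠ 0 by omega),
        show extVec (Function.update x (⟨0, h0⟩ : Fin n) s) 0 = s from extVec_update_self x _ s]
    ring
  show deriv (fun s => rfmField n lam k g (Function.update x ⟨0, h0⟩ s) ⟨1, h1⟩) (x ⟨0, h0⟩) = _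
  rw [hfun]
  exact deriv_affine _ _ _

lemma jac_col0_zero {n : ℕ} (hn : 3 ≤ n) (lam : ℕ → ℝ) (k : ℝ) (g : ℝ → ℝ)
    (x : Fin n → ℝ) (i : Fin n) (hi : 2 ≤ i.val) :
    rfmJac n lam k g x i ⟨0, by have := hn; omega⟩ = 0 := by
  have h0 : (0:ℕ) < n := by omega
  have hiv := i.isLt
  have hfun : (fun s => rfmField n lam k g (Function.update x ⟨0, h0⟩ s) i)
      = fun _ => rfmField n lam k g x i := by
    funext s
    show rfmFlow n lam k g (Function.update x ⟨0, h0⟩ s) i.val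
        - rfmFlow n lam k g (Function.update x ⟨0, h0⟩ s) (i.val + 1)
        = rfmFlow n lam k g x i.val - rfmFlow n lam k g x (i.val + 1)
    rw [rfmFlow_update_ne n lam k g x _ s i.val (show i.val - 1 ≠ 0 by omega)
          (show i.val ≠ 0 by omega) (fun h => absurd h (by omega)),
        rfmFlow_update_ne n lam k g x _ s (i.val + 1) (show i.val + 1 - 1 ≠ 0 by omega)
          (show i.val + 1 ≠ 0 by omega) (fun h => absurd h (by omega))]
  show deriv (fun s => rfmField n lam k g (Function.update x ⟨0, h0⟩ s) i) (x ⟨0, h0⟩) = 0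
  rw [hfun]
  exact deriv_const _ _

/- ### Jacobian entries, column n-1 -/

lemma jac_0n {n : ℕ} (hn : 3 ≤ n) (lam : ℕ → ℝ) (k : ℝ) (g : ℝ → ℝ)
    (hg : Differentiable ℝ g) (x : Fin n → ℝ) :
    rfmJac n lam k g x ⟨0, by have := hn; omega⟩ ⟨n - 1, by have := hn; omega⟩ =
      lam 0 * k * (deriv g (lam n * extVec x (n - 1)) * lam n) * (1 - extVec x 0) := by
  have hn1 : n - 1 < n := by omega
  have h0 : (0:ℕ) < n := by omega
  have hfun : (fun s => rfmField n lam k g (Function.update x ⟨n - 1, hn1⟩ s) ⟨0, h0⟩)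
      = fun s => lam 0 * k * g (lam n * s) * (1 - extVec x 0)
          - lam 1 * extVec x 0 * (1 - extVec x 1) := by
    funext s
    show rfmFlow n lam k g (Function.update x ⟨n - 1, hn1⟩ s) 0
        - rfmFlow n lam k g (Function.update x ⟨n - 1, hn1⟩ s) 1 = _
    rw [rfmFlow_zero, rfmFlow_mid n lam k g _ 1 one_ne_zero (by omega),
        show (1:ℕ) - 1 = 0 from rfl,
        show extVec (Function.update x (⟨n - 1, hn1⟩ : Fin n) s) (n - 1) = s from
          extVec_update_self x _ s,
        extVec_update_ne x _ s 0 (show (0:ℕ) ≠ n - 1 by omega),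
        extVec_update_ne x _ s 1 (show (1:ℕ) ≠ n - 1 by omega)]
  have hd : HasDerivAt (fun s : ℝ => lam 0 * k * g (lam n * s) * (1 - extVec x 0)
      - lam 1 * extVec x 0 * (1 - extVec x 1))
      (lam 0 * k * (deriv g (lam n * x ⟨n - 1, hn1⟩) * lam n) * (1 - extVec x 0))
      (x ⟨n - 1, hn1⟩) := by
    have h1 : HasDerivAt (fun s : ℝ => lam n * s) (lam n) (x ⟨n - 1, hn1⟩) := by
      simpa using (hasDerivAt_id (x ⟨n - 1, hn1⟩)).const_mul (lam n)
    have h2 : HasDerivAt g (deriv g (lam n * x ⟨n - 1, hn1⟩)) (lam n * x ⟨n - 1, hn1⟩) :=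
      (hg _).hasDerivAt
    have h3 : HasDerivAt (fun s : ℝ => g (lam n * s))
        (deriv g (lam n * x ⟨n - 1, hn1⟩) * lam n) (x ⟨n - 1, hn1⟩) := h2.comp _ h1
    simpa [mul_assoc] using ((h3.const_mul (lam 0 * k)).mul_const (1 - extVec x 0)).sub_const
      (lam 1 * extVec x 0 * (1 - extVec x 1))
  show deriv (fun s => rfmField n lam k g (Function.update x ⟨n - 1, hn1⟩ s) ⟨0, h0⟩)
      (x ⟨n - 1, hn1⟩) = _
  rw [hfun, extVec_lt x (n - 1) hn1]
  exact hd.deriv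

lemma jac_n2n {n : ℕ} (hn : 3 ≤ n) (lam : ℕ → ℝ) (k : ℝ) (g : ℝ → ℝ) (x : Fin n → ℝ) :
    rfmJac n lam k g x ⟨n - 2, by have := hn; omega⟩ ⟨n - 1, by have := hn; omega⟩ = lam (n - 1) * extVec x (n - 2) := by
  have hn1 : n - 1 < n := by omega
  have hn2 : n - 2 < n := by omega
  have hfun : (fun s => rfmField n lam k g (Function.update x ⟨n - 1, hn1⟩ s) ⟨n - 2, hn2⟩)
      = fun s => (lam (n - 2) * extVec x (n - 3) * (1 - extVec x (n - 2))
          - lam (n - 1) * extVec x (n - 2))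
        + (lam (n - 1) * extVec x (n - 2)) * s := by
    funext s
    show rfmFlow n lam k g (Function.update x ⟨n - 1, hn1⟩ s) (n - 2)
        - rfmFlow n lam k g (Function.update x ⟨n - 1, hn1⟩ s) (n - 2 + 1) = _
    rw [show n - 2 + 1 = n - 1 by omega,
        rfmFlow_mid n lam k g _ (n - 2) (by omega) (by omega),
        rfmFlow_mid n lam k g _ (n - 1) (by omega) (by omega),
        show n - 2 - 1 = n - 3 by omega, show n - 1 - 1 = n - 2 by omega,
        extVec_update_ne x _ s (n - 3) (show n - 3 ≠ n - 1 by omega),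
        extVec_update_ne x _ s (n - 2) (show n - 2 ≠ n - 1 by omega),
        show extVec (Function.update x (⟨n - 1, hn1⟩ : Fin n) s) (n - 1) = s from
          extVec_update_self x _ s]
    ring
  show deriv (fun s => rfmField n lam k g (Function.update x ⟨n - 1, hn1⟩ s) ⟨n - 2, hn2⟩)
      (x ⟨n - 1, hn1⟩) = _
  rw [hfun]
  exact deriv_affine _ _ _

lemma jac_nn {n : ℕ} (hn : 3 ≤ n) (lam : ℕ → ℝ) (k : ℝ) (g : ℝ → ℝ) (x : Fin n → ℝ) :
    rfmJac n lam k g x ⟨n - 1, by have := hn; omega⟩ ⟨n - 1, by have := hn; omega⟩ =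
      -(lam (n - 1) * extVec x (n - 2)) - lam n := by
  have hn1 : n - 1 < n := by omega
  have hfun : (fun s => rfmField n lam k g (Function.update x ⟨n - 1, hn1⟩ s) ⟨n - 1, hn1⟩)
      = fun s => lam (n - 1) * extVec x (n - 2)
        + (-(lam (n - 1) * extVec x (n - 2)) - lam n) * s := by
    funext s
    show rfmFlow n lam k g (Function.update x ⟨n - 1, hn1⟩ s) (n - 1)
        - rfmFlow n lam k g (Function.update x ⟨n - 1, hn1⟩ s) (n - 1 + 1) = _
    rw [show n - 1 + 1 = n by omega,
        rfmFlow_mid n lam k g _ (n - 1) (by omega) (by omega),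
        rfmFlow_last n lam k g _ (by omega),
        show n - 1 - 1 = n - 2 by omega,
        extVec_update_ne x _ s (n - 2) (show n - 2 ≠ n - 1 by omega),
        show extVec (Function.update x (⟨n - 1, hn1⟩ : Fin n) s) (n - 1) = s from
          extVec_update_self x _ s]
    ring
  show deriv (fun s => rfmField n lam k g (Function.update x ⟨n - 1, hn1⟩ s) ⟨n - 1, hn1⟩)
      (x ⟨n - 1, hn1⟩) = _
  rw [hfun]
  exact deriv_affine _ _ _

lemma jac_coln_zero {n : ℕ} (hn : 3 ≤ n) (lam : ℕ → ℝ) (k : ℝ) (g : ℝ → ℝ)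
    (x : Fin n → ℝ) (i : Fin n) (hi0 : i.val ≠ 0) (hi2 : i.val ≠ n - 2) (hi1 : i.val ≠ n - 1) :
    rfmJac n lam k g x i ⟨n - 1, by have := hn; omega⟩ = 0 := by
  have hn1 : n - 1 < n := by omega
  have hiv := i.isLt
  have hfun : (fun s => rfmField n lam k g (Function.update x ⟨n - 1, hn1⟩ s) i)
      = fun _ => rfmField n lam k g x i := by
    funext s
    show rfmFlow n lam k g (Function.update x ⟨n - 1, hn1⟩ s) i.val
        - rfmFlow n lam k g (Function.update x ⟨n - 1, hn1⟩ s) (i.val + 1)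
        = rfmFlow n lam k g x i.val - rfmFlow n lam k g x (i.val + 1)
    rw [rfmFlow_update_ne n lam k g x _ s i.val (show i.val - 1 ≠ n - 1 by omega)
          (show i.val ≠ n - 1 by omega) (fun h => absurd h (by omega)),
        rfmFlow_update_ne n lam k g x _ s (i.val + 1) (show i.val + 1 - 1 ≠ n - 1 by omega)
          (show i.val + 1 ≠ n - 1 by omega) (fun h => absurd h (by omega))]
  show deriv (fun s => rfmField n lam k g (Function.update x ⟨n - 1, hn1⟩ s) i)
      (x ⟨n - 1, hn1⟩) = 0
  rw [hfun]
  exact deriv_const _ _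

/-- For sufficiently small feedback gain the extreme column
sums of the Jacobian are uniformly negative on the cube:
`s_1(x) ≤ -λ_0 k g(λ_n) < 0` and
`s_n(x) ≤ -λ_n - λ_0 λ_n k · min_{r ∈ [0,1]} g'(λ_n r) < 0`.
(0-based Lean indexing; the minimum is expressed as an `sInf` over the image.) -/
theorem rfm_negfb_column_sums_negative_small_gain
    (n : ℕ) (hn : 3 ≤ n) (lam : ℕ → ℝ) (hlam : ∀ i, i ≤ n → 0 < lam i)
    (g : ℝ → ℝ) (hg : ContDiff ℝ 1 g) (hgpos : ∀ z : ℝ, 0 ≤ z → 0 < g z)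
    (hgder : ∀ z : ℝ, 0 < z → deriv g z < 0) :
    ∃ kstar : ℝ, 0 < kstar ∧ ∀ k : ℝ, 0 < k → k < kstar →
      (∀ x : Fin n → ℝ, (∀ i, x i ∈ Set.Icc (0:ℝ) 1) →
        colSum n lam k g x ⟨0, by omega⟩ ≤ -(lam 0 * k * g (lam n))) ∧
      (-(lam 0 * k * g (lam n)) < 0) ∧
      (∀ x : Fin n → ℝ, (∀ i, x i ∈ Set.Icc (0:ℝ) 1) →
        colSum n lam k g x ⟨n - 1, by omega⟩ ≤
          -lam n - lam 0 * lam n * k *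
            sInf ((fun r : ℝ => deriv g (lam n * r)) '' Set.Icc (0:ℝ) 1)) ∧
      (-lam n - lam 0 * lam n * k *
        sInf ((fun r : ℝ => deriv g (lam n * r)) '' Set.Icc (0:ℝ) 1) < 0) := by
  have hgd : Differentiable ℝ g := hg.differentiable one_ne_zero
  have hcont : Continuous (deriv g) := hg.continuous_deriv le_rfl
  have hlamn : 0 < lam n := hlam n le_rfl
  have hlam0 : 0 < lam 0 := hlam 0 (by omega)
  have hlam1 : 0 < lam 1 := hlam 1 (by omega)
  have hlamn1 : 0 < lam (n - 1) := hlam (n - 1) (by omega)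
  set S := (fun r : ℝ => deriv g (lam n * r)) '' Set.Icc (0:ℝ) 1 with hS
  have hScomp : IsCompact S := isCompact_Icc.image (hcont.comp (continuous_const.mul continuous_id))
  have hbdd : BddBelow S := hScomp.bddBelow
  set m := sInf S with hm
  have hm_le : ∀ r : ℝ, r ∈ Set.Icc (0:ℝ) 1 → m ≤ deriv g (lam n * r) :=
    fun r hr => csInf_le hbdd ⟨r, hr, rfl⟩
  have hm_neg : m < 0 :=
    lt_of_le_of_lt (by simpa using hm_le 1 (by simp)) (hgder (lam n) hlamn)
  have hgle : ∀ z : ℝ, 0 ≤ z → deriv g z ≤ 0 := by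
    intro z hz
    rcases hz.eq_or_lt with h | h
    · rw [← h]
      have ht : Filter.Tendsto (deriv g) (nhdsWithin 0 (Set.Ioi 0)) (nhds (deriv g 0)) :=
        (hcont.tendsto 0).mono_left nhdsWithin_le_nhds
      exact le_of_tendsto ht (Filter.eventually_of_mem self_mem_nhdsWithin
        fun z hz => (hgder z hz).le)
    · exact (hgder z h).le
  have hanti : AntitoneOn g (Set.Ici (0:ℝ)) := by
    have := strictAntiOn_of_deriv_neg (convex_Ici (0:ℝ)) hg.continuous.continuousOn
      (fun z hz => hgder z (by simpa [interior_Ici] using hz))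
    exact this.antitoneOn
  have hmpos : 0 < lam 0 * (-m) := mul_pos hlam0 (neg_pos.2 hm_neg)
  refine ⟨1 / (lam 0 * (-m)), div_pos one_pos hmpos, fun k hk hkk => ?_⟩
  have hk1 : k * (lam 0 * (-m)) < 1 := (lt_div_iff₀ hmpos).1 hkk
  have hn1 : n - 1 < n := by omega
  refine ⟨?_, ?_, ?_, ?_⟩
  · -- column 0 bound
    intro x hx
    have hx1 := hx ⟨1, by omega⟩
    have hxn1 := hx ⟨n - 1, hn1⟩
    have e00 := jac_00 hn lam k g x
    have e10 := jac_10 hn lam k g x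
    have hev1 : extVec x 1 = x ⟨1, by omega⟩ := extVec_lt x 1 (by omega)
    have hevn : extVec x (n - 1) = x ⟨n - 1, hn1⟩ := extVec_lt x (n - 1) hn1
    have hsum : ∑ i ∈ Finset.univ.erase (⟨0, by omega⟩ : Fin n),
        |rfmJac n lam k g x i ⟨0, by omega⟩| = lam 1 * (1 - extVec x 1) := by
      rw [Finset.sum_eq_single_of_mem (⟨1, by omega⟩ : Fin n)]
      · rw [e10]
        rw [hev1]
        exact abs_of_nonneg (by nlinarith [hx1.2])
      · simp [Finset.mem_erase, Fin.ext_iff]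
      · intro b hb hb1
        have hb0 : b.val ≠ 0 := fun h => (Finset.mem_erase.1 hb).1 (Fin.ext h)
        have hbo : b.val ≠ 1 := fun h => hb1 (Fin.ext h)
        rw [jac_col0_zero hn lam k g x b (by omega), abs_zero]
    have hcs : colSum n lam k g x ⟨0, by omega⟩
        = -(lam 0 * k * g (lam n * extVec x (n - 1))) := by
      unfold colSum
      rw [e00, hsum]; ring
    rw [hcs, hevn]
    have hGle : g (lam n) ≤ g (lam n * x ⟨n - 1, hn1⟩) := by
      have h1 : (0:ℝ) ≤ lam n * x ⟨n - 1, hn1⟩ := mul_nonneg hlamn.le hxn1.1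
      have h2 : lam n * x ⟨n - 1, hn1⟩ ≤ lam n := by nlinarith [hxn1.2]
      exact hanti h1 (Set.mem_Ici.2 hlamn.le) h2
    nlinarith [mul_le_mul_of_nonneg_left hGle (mul_pos hlam0 hk).le]
  · -- negativity of column 0 bound
    have := hgpos (lam n) hlamn.le
    nlinarith [mul_pos (mul_pos hlam0 hk) this]
  · -- column n-1 bound
    intro x hx
    have hx0 := hx ⟨0, by omega⟩
    have hxn1 := hx ⟨n - 1, hn1⟩
    have hxn2 := hx ⟨n - 2, by omega⟩
    have hev0 : extVec x 0 = x ⟨0, by omega⟩ := extVec_lt x 0 (by omega)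
    have hevn : extVec x (n - 1) = x ⟨n - 1, hn1⟩ := extVec_lt x (n - 1) hn1
    have hevn2 : extVec x (n - 2) = x ⟨n - 2, by omega⟩ := extVec_lt x (n - 2) (by omega)
    have e0 := jac_0n hn lam k g hgd x
    have e2 := jac_n2n hn lam k g x
    have e3 := jac_nn hn lam k g x
    have hdz : deriv g (lam n * x ⟨n - 1, hn1⟩) ≤ 0 :=
      hgle _ (mul_nonneg hlamn.le hxn1.1)
    have hmz : m ≤ deriv g (lam n * x ⟨n - 1, hn1⟩) := hm_le _ hxn1
    have habs0 : |rfmJac n lam k g x ⟨0, by omega⟩ ⟨n - 1, by omega⟩|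
        = -(lam 0 * k * (deriv g (lam n * x ⟨n - 1, hn1⟩) * lam n) * (1 - x ⟨0, by omega⟩)) := by
      rw [e0, hev0, hevn]
      apply abs_of_nonpos
      have h1 : (0:ℝ) ≤ (lam 0 * k) * ((-(deriv g (lam n * x ⟨n - 1, hn1⟩))) * lam n)
          * (1 - x ⟨0, by omega⟩) := by
        apply mul_nonneg (mul_nonneg (mul_pos hlam0 hk).le
          (mul_nonneg (neg_nonneg.2 hdz) hlamn.le))
        nlinarith [hx0.2]
      nlinarith [h1]
    have hsum : ∑ i ∈ Finset.univ.erase (⟨n - 1, by omega⟩ : Fin n),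
        |rfmJac n lam k g x i ⟨n - 1, by omega⟩|
        = -(lam 0 * k * (deriv g (lam n * x ⟨n - 1, hn1⟩) * lam n) * (1 - x ⟨0, by omega⟩))
          + lam (n - 1) * extVec x (n - 2) := by
      have hne : (⟨0, by omega⟩ : Fin n) ≠ ⟨n - 2, by omega⟩ := by
        simp [Fin.ext_iff]; omega
      have hsub : ({⟨0, by omega⟩, ⟨n - 2, by omega⟩} : Finset (Fin n))
          ⊆ Finset.univ.erase (⟨n - 1, by omega⟩ : Fin n) := by
        intro a ha
        simp only [Finset.mem_insert, Finset.mem_singleton] at ha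
        rcases ha with h | h <;> subst h <;>
          simp [Finset.mem_erase, Fin.ext_iff] <;> omega
      rw [← Finset.sum_subset hsub]
      · rw [Finset.sum_pair hne, habs0, e2]
        rw [hevn2]
        rw [abs_of_nonneg (mul_nonneg hlamn1.le hxn2.1), ← hevn2]
      · intro i hi hnot
        simp only [Finset.mem_insert, Finset.mem_singleton] at hnot
        push_neg at hnot
        have hi0 : i.val ≠ 0 := fun h => hnot.1 (Fin.ext h)
        have hi2 : i.val ≠ n - 2 := fun h => hnot.2 (Fin.ext h)
        have hi1 : i.val ≠ n - 1 := fun h => (Finset.mem_erase.1 hi).1 (Fin.ext h)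
        rw [jac_coln_zero hn lam k g x i hi0 hi2 hi1, abs_zero]
    have hcs : colSum n lam k g x ⟨n - 1, by omega⟩
        = -lam n - lam 0 * k * (deriv g (lam n * x ⟨n - 1, hn1⟩) * lam n)
          * (1 - x ⟨0, by omega⟩) := by
      unfold colSum
      rw [e3, hsum]; ring
    rw [hcs]
    have hA := mul_le_mul_of_nonneg_left hmz
      (le_of_lt (mul_pos (mul_pos hlam0 hlamn) hk))
    have hB : (0:ℝ) ≤ (lam 0 * lam n * k) * ((-(deriv g (lam n * x ⟨n - 1, hn1⟩)))
        * x ⟨0, by omega⟩) :=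
      mul_nonneg (mul_pos (mul_pos hlam0 hlamn) hk).le
        (mul_nonneg (neg_nonneg.2 hdz) hx0.1)
    nlinarith [hA, hB]
  · -- negativity of column n-1 bound
    calc -lam n - lam 0 * lam n * k * m
        = lam n * (k * (lam 0 * -m)) - lam n := by ring
      _ < lam n * 1 - lam n := by linarith [mul_lt_mul_of_pos_left hk1 hlamn]
      _ = 0 := by ring
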